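/- Define on the two-dimensional neck region Ω_{2R} the Keller-type function k(x) = (x₂ − (h₁(x₁) − h₂(x₁))/2)/δ(x₁), the functions F(x) = 1 − ((h₁ + h₂)(x₁) + 3x₁²)/δ(x₁) − 3(h₁ − h₂)(x₁) x₂/(2δ(x₁)) − 5 k(x) x₂ and G(x) = 3δ(x₁) k(x) ∂_{x₁}k(x) x₂ + (3(h₁ − h₂)(x₁)/2) ∂_{x₁}k(x) x₂ + 2x₁ k(x) − (ε − 3x₁²) ∂_{x₁}k(x), and the vector field v₃¹(x) = ψ₃(x)(k(x) + 1/2) + (F(x), G(x))ᵀ (k(x)² − 1/4), where ψ₃(x) = (x₂, −x₁)ᵀ. Then v₃¹ is divergence free in Ω_{2R} (∇·v₃¹ = 0), and it attains the boundary values v₃¹ = ψ₃ on Γ_{2R}^+ and v₃¹ = 0 on Γ_{2R}^−. -/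

import Mathlib

open Set

noncomputable section

/-- Points of the plane. -/
abbrev Pt : Type := ℝ × ℝ

/-- Partial derivative in the first variable. -/
def pd1 (f : Pt → ℝ) (x : Pt) : ℝ := deriv (fun t => f (t, x.2)) x.1

/-- Partial derivative in the second variable. -/
def pd2 (f : Pt → ℝ) (x : Pt) : ℝ := deriv (fun t => f (x.1, t)) x.2

/-!
With φ = ε − 3|x|², the correctors are F = φ ∂₂k − 2k x₂ and G = 2k x₁ − φ ∂₁k: this uses
δk = x₂ − (h₁ − h₂)/2 and ∂₂k = 1/δ. Hence F ∂₁k + G ∂₂k = −2k (ψ₃·∇k), and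
∂₁F + ∂₂G = 4 ψ₃·∇k because the mixed partials of k agree (both are −δ'/δ², so only first
derivatives of h₁, h₂ enter). As div ψ₃ = 0,
  ∇·v₃¹ = ψ₃·∇k + (k² − 1/4)(∂₁F + ∂₂G) + 2k (F ∂₁k + G ∂₂k) = ψ₃·∇k (1 + 4(k² − 1/4) − 4k²) = 0.
The boundary values hold because k = ±1/2 on Γ^±.
-/

open Filter Topology

theorem pd1_add_pd2_eq_zero_of_corrector {k F G : Pt → ℝ} {p q k₁ k₂ F₁ G₂ : ℝ}
    (hk₁ : HasDerivAt (fun s => k (s, q)) k₁ p) (hk₂ : HasDerivAt (fun t => k (p, t)) k₂ q)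
    (hF : HasDerivAt (fun s => F (s, q)) F₁ p) (hG : HasDerivAt (fun t => G (p, t)) G₂ q)
    (hdiv : F₁ + G₂ = 4 * (q * k₁ - p * k₂))
    (htransport : F (p, q) * k₁ + G (p, q) * k₂ = -2 * k (p, q) * (q * k₁ - p * k₂)) :
    pd1 (fun y => y.2 * (k y + 1 / 2) + F y * (k y ^ 2 - 1 / 4)) (p, q) +
      pd2 (fun y => -y.1 * (k y + 1 / 2) + G y * (k y ^ 2 - 1 / 4)) (p, q) = 0 := by
  have h₁ : HasDerivAt (fun s => q * (k (s, q) + 1 / 2) + F (s, q) * (k (s, q) ^ 2 - 1 / 4))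
      (q * k₁ + (F₁ * (k (p, q) ^ 2 - 1 / 4) + F (p, q) * (2 * k (p, q) * k₁))) p :=
    (((hk₁.add_const _).const_mul q).add (hF.mul ((hk₁.pow 2).sub_const _))).congr_deriv
      (by simp only [Pi.pow_apply, Nat.cast_ofNat]; ring)
  have h₂ : HasDerivAt (fun t => -p * (k (p, t) + 1 / 2) + G (p, t) * (k (p, t) ^ 2 - 1 / 4))
      (-p * k₂ + (G₂ * (k (p, q) ^ 2 - 1 / 4) + G (p, q) * (2 * k (p, q) * k₂))) q :=
    (((hk₂.add_const _).const_mul (-p)).add (hG.mul ((hk₂.pow 2).sub_const _))).congr_deriv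
      (by simp only [Pi.pow_apply, Nat.cast_ofNat]; ring)
  simp only [pd1, pd2, h₁.deriv, h₂.deriv]
  linear_combination (k (p, q) ^ 2 - 1 / 4) * hdiv + 2 * k (p, q) * htransport

def normHeight (a d : ℝ → ℝ) (x : Pt) : ℝ := (x.2 - a x.1) / d x.1

theorem hasDerivAt_normHeight_snd (a d : ℝ → ℝ) (p q : ℝ) :
    HasDerivAt (fun t => normHeight a d (p, t)) (d p)⁻¹ q := by
  simpa [normHeight, div_eq_mul_inv] using ((hasDerivAt_id q).sub_const (a p)).mul_const (d p)⁻¹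

section NormHeight

variable {a d : ℝ → ℝ} {a' d' p q : ℝ}

theorem hasDerivAt_normHeight_fst (ha : HasDerivAt a a' p) (hd : HasDerivAt d d' p)
    (hd₀ : d p ≠ 0) (q : ℝ) :
    HasDerivAt (fun s => normHeight a d (s, q)) (-(a' + normHeight a d (p, q) * d') / d p) p := by
  refine (((hasDerivAt_const p q).sub ha).div hd hd₀).congr_deriv ?_
  simp only [normHeight, Pi.sub_apply]
  field_simp
  ring

theorem normHeight_eq_half (hd₀ : d p ≠ 0) (hq : q = a p + d p / 2) :
    normHeight a d (p, q) = 1 / 2 := by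
  simp only [normHeight, hq]
  field_simp
  ring

theorem normHeight_eq_neg_half (hd₀ : d p ≠ 0) (hq : q = a p - d p / 2) :
    normHeight a d (p, q) = -(1 / 2) := by
  simp only [normHeight, hq]
  field_simp
  ring

end NormHeight

def correctorF (c : ℝ) (a d : ℝ → ℝ) (x : Pt) : ℝ :=
  (c - 3 * x.1 ^ 2 - 3 * x.2 ^ 2) / d x.1 - 2 * normHeight a d x * x.2

def correctorG (c : ℝ) (a d : ℝ → ℝ) (x : Pt) : ℝ :=
  2 * x.1 * normHeight a d x - (c - 3 * x.1 ^ 2 - 3 * x.2 ^ 2) * pd1 (normHeight a d) x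

section Correctors

variable {a d : ℝ → ℝ} {a' d' p : ℝ} (c q : ℝ)

theorem hasDerivAt_correctorF_fst (ha : HasDerivAt a a' p) (hd : HasDerivAt d d' p)
    (hd₀ : d p ≠ 0) :
    HasDerivAt (fun s => correctorF c a d (s, q))
      (-(6 * p) / d p - (c - 3 * p ^ 2 - 3 * q ^ 2) * d' / d p ^ 2 -
        2 * q * (-(a' + normHeight a d (p, q) * d') / d p)) p := by
  have hφ : HasDerivAt (fun s => c - 3 * s ^ 2 - 3 * q ^ 2) (-(6 * p)) p :=
    (((hasDerivAt_pow 2 p).const_mul 3).const_sub c).sub_const _ |>.congr_deriv (by ring)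
  refine ((hφ.div hd hd₀).sub
    (((hasDerivAt_normHeight_fst ha hd hd₀ q).const_mul 2).mul_const q)).congr_deriv ?_
  field_simp

theorem pd1_normHeight (ha : HasDerivAt a a' p) (hd : HasDerivAt d d' p) (hd₀ : d p ≠ 0) :
    pd1 (normHeight a d) (p, q) = -(a' + normHeight a d (p, q) * d') / d p :=
  (hasDerivAt_normHeight_fst ha hd hd₀ q).deriv

theorem hasDerivAt_correctorG_snd (ha : HasDerivAt a a' p) (hd : HasDerivAt d d' p)
    (hd₀ : d p ≠ 0) :
    HasDerivAt (fun t => correctorG c a d (p, t))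
      (2 * p / d p + 6 * q * (-(a' + normHeight a d (p, q) * d') / d p) +
        (c - 3 * p ^ 2 - 3 * q ^ 2) * d' / d p ^ 2) q := by
  simp only [correctorG, pd1_normHeight _ ha hd hd₀]
  have hk := hasDerivAt_normHeight_snd a d p q
  have hφ : HasDerivAt (fun t => c - 3 * p ^ 2 - 3 * t ^ 2) (-(6 * q)) q :=
    ((hasDerivAt_pow 2 q).const_mul 3).const_sub _ |>.congr_deriv (by ring)
  refine ((hk.const_mul (2 * p)).sub
    (hφ.mul (((hk.mul_const d').const_add a').neg.div_const (d p)))).congr_deriv ?_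
  simp only [Pi.neg_apply]
  field_simp
  ring

theorem pd1_add_pd2_eq_zero_of_normHeight (ha : HasDerivAt a a' p) (hd : HasDerivAt d d' p)
    (hd₀ : d p ≠ 0) :
    pd1 (fun y => y.2 * (normHeight a d y + 1 / 2) +
        correctorF c a d y * (normHeight a d y ^ 2 - 1 / 4)) (p, q) +
      pd2 (fun y => -y.1 * (normHeight a d y + 1 / 2) +
        correctorG c a d y * (normHeight a d y ^ 2 - 1 / 4)) (p, q) = 0 := by
  refine pd1_add_pd2_eq_zero_of_corrector (hasDerivAt_normHeight_fst ha hd hd₀ q)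
    (hasDerivAt_normHeight_snd a d p q) (hasDerivAt_correctorF_fst c q ha hd hd₀)
    (hasDerivAt_correctorG_snd c q ha hd hd₀) (by field_simp; ring) ?_
  simp only [correctorF, correctorG, pd1_normHeight q ha hd hd₀]
  field_simp
  ring

theorem pd1_add_pd2_eq_zero_of_eventuallyEq {F G : Pt → ℝ} (ha : HasDerivAt a a' p)
    (hd : HasDerivAt d d' p) (hd₀ : d p ≠ 0)
    (hF : ∀ᶠ s in 𝓝 p, F (s, q) = correctorF c a d (s, q))
    (hG : ∀ t, G (p, t) = correctorG c a d (p, t)) :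
    pd1 (fun y => y.2 * (normHeight a d y + 1 / 2) +
        F y * (normHeight a d y ^ 2 - 1 / 4)) (p, q) +
      pd2 (fun y => -y.1 * (normHeight a d y + 1 / 2) +
        G y * (normHeight a d y ^ 2 - 1 / 4)) (p, q) = 0 := by
  have hF' : pd1 (fun y => y.2 * (normHeight a d y + 1 / 2) +
        F y * (normHeight a d y ^ 2 - 1 / 4)) (p, q) =
      pd1 (fun y => y.2 * (normHeight a d y + 1 / 2) +
        correctorF c a d y * (normHeight a d y ^ 2 - 1 / 4)) (p, q) :=
    EventuallyEq.deriv_eq (hF.mono fun s hs => by simp only [hs])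
  simp only [hF', pd2, hG]
  exact pd1_add_pd2_eq_zero_of_normHeight c q ha hd hd₀

end Correctors

section NeckCorrectors

variable {ε : ℝ} {h1 h2 δ : ℝ → ℝ} {x : Pt}

theorem correctorF_eq (hδ : ∀ s, δ s = ε + h1 s + h2 s) (hx : δ x.1 ≠ 0) :
    1 - ((h1 x.1 + h2 x.1) + 3 * x.1 ^ 2) / δ x.1 - 3 * (h1 x.1 - h2 x.1) * x.2 / (2 * δ x.1) -
        5 * normHeight (fun s => (h1 s - h2 s) / 2) δ x * x.2 =
      correctorF ε (fun s => (h1 s - h2 s) / 2) δ x := by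
  simp only [correctorF, normHeight]
  rw [hδ] at hx ⊢
  field_simp
  ring

theorem correctorG_eq (hx : δ x.1 ≠ 0) :
    3 * δ x.1 * normHeight (fun s => (h1 s - h2 s) / 2) δ x *
          pd1 (normHeight (fun s => (h1 s - h2 s) / 2) δ) x * x.2 +
        3 * (h1 x.1 - h2 x.1) / 2 * pd1 (normHeight (fun s => (h1 s - h2 s) / 2) δ) x * x.2 +
        2 * x.1 * normHeight (fun s => (h1 s - h2 s) / 2) δ x -
        (ε - 3 * x.1 ^ 2) * pd1 (normHeight (fun s => (h1 s - h2 s) / 2) δ) x =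
      correctorG ε (fun s => (h1 s - h2 s) / 2) δ x := by
  simp only [correctorG]
  generalize pd1 (normHeight (fun s => (h1 s - h2 s) / 2) δ) x = P
  simp only [normHeight]
  field_simp
  ring

end NeckCorrectors

theorem ContDiffOn.hasDerivAt_of_abs_lt {f : ℝ → ℝ} {n : ℕ} {r x : ℝ}
    (hf : ContDiffOn ℝ (n + 1) f (Icc (-r) r)) (hx : |x| < r) : HasDerivAt f (deriv f x) x :=
  ((hf.differentiableOn (by simp)).differentiableAt
    (Icc_mem_nhds (abs_lt.mp hx).1 (abs_lt.mp hx).2)).hasDerivAt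

theorem v31_divfree_and_boundary_general (m : ℕ) (ε R : ℝ)
    (h1 h2 : ℝ → ℝ)
    (hh1 : ContDiffOn ℝ (m + 1) h1 (Icc (-(2 * R)) (2 * R)))
    (hh2 : ContDiffOn ℝ (m + 1) h2 (Icc (-(2 * R)) (2 * R)))
    (hord : ∀ x₁ : ℝ, |x₁| ≤ 2 * R → -(ε / 2) - h2 x₁ < ε / 2 + h1 x₁)
    -- the vertical width δ and the Keller-type function k
    (δ : ℝ → ℝ) (hδ : δ = fun x₁ => ε + h1 x₁ + h2 x₁)
    (k : Pt → ℝ) (hk : k = fun x => (x.2 - (h1 x.1 - h2 x.1) / 2) / δ x.1)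
    -- the rigid motion ψ₃
    (ψ₃ : Pt → Pt) (hψ₃ : ψ₃ = fun x => ((x.2, -x.1) : Pt))
    -- the correctors F and G
    (F : Pt → ℝ) (hF : F = fun x =>
      1 - ((h1 x.1 + h2 x.1) + 3 * x.1 ^ 2) / δ x.1 -
        3 * (h1 x.1 - h2 x.1) * x.2 / (2 * δ x.1) - 5 * k x * x.2)
    (G : Pt → ℝ) (hG : G = fun x =>
      3 * δ x.1 * k x * pd1 k x * x.2 + 3 * (h1 x.1 - h2 x.1) / 2 * pd1 k x * x.2 +
        2 * x.1 * k x - (ε - 3 * x.1 ^ 2) * pd1 k x)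
    -- the auxiliary vector field v₃¹
    (v : Pt → Pt) (hv : v = fun x =>
      (((ψ₃ x).1 * (k x + 1 / 2) + F x * (k x ^ 2 - 1 / 4),
        (ψ₃ x).2 * (k x + 1 / 2) + G x * (k x ^ 2 - 1 / 4)) : Pt))
    -- the neck region Ω_{2R}
    (Ω2R : Set Pt) (hΩ : Ω2R =
      {x : Pt | -(ε / 2) - h2 x.1 < x.2 ∧ x.2 < ε / 2 + h1 x.1 ∧ |x.1| < 2 * R}) :
    (∀ x ∈ Ω2R, pd1 (fun y => (v y).1) x + pd2 (fun y => (v y).2) x = 0) ∧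
    (∀ x₁ : ℝ, |x₁| < 2 * R → v (x₁, ε / 2 + h1 x₁) = ψ₃ (x₁, ε / 2 + h1 x₁)) ∧
    (∀ x₁ : ℝ, |x₁| < 2 * R → v (x₁, -(ε / 2) - h2 x₁) = (0 : Pt)) := by
  set a : ℝ → ℝ := fun s => (h1 s - h2 s) / 2
  have hk' : k = normHeight a δ := hk
  have hδ₀ : ∀ x₁, |x₁| < 2 * R → δ x₁ ≠ 0 := fun x₁ hx => by
    rw [hδ]
    linarith [hord x₁ hx.le]
  subst hv hψ₃ hΩ
  refine ⟨?_, ?_, ?_⟩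
  · rintro ⟨p, q⟩ ⟨-, -, hp : |p| < 2 * R⟩
    have hnear : ∀ᶠ s in 𝓝 p, |s| < 2 * R :=
      (isOpen_lt continuous_abs continuous_const).mem_nhds hp
    have hd : HasDerivAt δ (deriv h1 p + deriv h2 p) p :=
      hδ ▸ ((hh1.hasDerivAt_of_abs_lt hp).const_add ε).add (hh2.hasDerivAt_of_abs_lt hp)
    rw [hF, hG, hk']
    exact pd1_add_pd2_eq_zero_of_eventuallyEq ε q
      (((hh1.hasDerivAt_of_abs_lt hp).sub (hh2.hasDerivAt_of_abs_lt hp)).div_const 2) hd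
      (hδ₀ p hp)
      (hnear.mono fun s hs => correctorF_eq (congrFun hδ) (hδ₀ s hs))
      (fun _ => correctorG_eq (hδ₀ p hp))
  · intro x₁ hx
    have : k (x₁, ε / 2 + h1 x₁) = 1 / 2 :=
      hk' ▸ normHeight_eq_half (hδ₀ x₁ hx) (by simp only [hδ, a]; ring)
    norm_num [this]
  · intro x₁ hx
    have : k (x₁, -(ε / 2) - h2 x₁) = -(1 / 2) :=
      hk' ▸ normHeight_eq_neg_half (hδ₀ x₁ hx) (by simp only [hδ, a]; ring)
    norm_num [this]

/-- the auxiliary vector field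
`v₃¹ = ψ₃ (k + 1/2) + (F, G)ᵀ (k² − 1/4)`, with ψ₃ = (x₂, −x₁)ᵀ and the explicit
correctors F, G, is divergence free in Ω_{2R} and attains the boundary values ψ₃ on
Γ_{2R}⁺ and 0 on Γ_{2R}⁻. -/
theorem v31_divfree_and_boundary (m : ℕ) (ε κ R : ℝ)
    (hε : 0 < ε) (hε' : ε < 1 / 2) (hκ : 0 < κ) (hR : 0 < R)
    (h1 h2 : ℝ → ℝ)
    (hh1 : ContDiffOn ℝ (m + 1) h1 (Icc (-(2 * R)) (2 * R)))
    (hh2 : ContDiffOn ℝ (m + 1) h2 (Icc (-(2 * R)) (2 * R)))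
    (h10 : h1 0 = 0) (h20 : h2 0 = 0)
    (h1d0 : deriv h1 0 = 0) (h2d0 : deriv h2 0 = 0)
    (hord : ∀ x₁ : ℝ, |x₁| ≤ 2 * R → -(ε / 2) - h2 x₁ < ε / 2 + h1 x₁)
    (hgap : ∀ x₁ : ℝ, |x₁| ≤ 2 * R → κ * x₁ ^ 2 ≤ h1 x₁ + h2 x₁)
    -- the vertical width δ and the Keller-type function k
    (δ : ℝ → ℝ) (hδ : δ = fun x₁ => ε + h1 x₁ + h2 x₁)
    (k : Pt → ℝ) (hk : k = fun x => (x.2 - (h1 x.1 - h2 x.1) / 2) / δ x.1)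
    -- the rigid motion ψ₃
    (ψ₃ : Pt → Pt) (hψ₃ : ψ₃ = fun x => ((x.2, -x.1) : Pt))
    -- the correctors F and G
    (F : Pt → ℝ) (hF : F = fun x =>
      1 - ((h1 x.1 + h2 x.1) + 3 * x.1 ^ 2) / δ x.1 -
        3 * (h1 x.1 - h2 x.1) * x.2 / (2 * δ x.1) - 5 * k x * x.2)
    (G : Pt → ℝ) (hG : G = fun x =>
      3 * δ x.1 * k x * pd1 k x * x.2 + 3 * (h1 x.1 - h2 x.1) / 2 * pd1 k x * x.2 +
        2 * x.1 * k x - (ε - 3 * x.1 ^ 2) * pd1 k x)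
    -- the auxiliary vector field v₃¹
    (v : Pt → Pt) (hv : v = fun x =>
      (((ψ₃ x).1 * (k x + 1 / 2) + F x * (k x ^ 2 - 1 / 4),
        (ψ₃ x).2 * (k x + 1 / 2) + G x * (k x ^ 2 - 1 / 4)) : Pt))
    -- the neck region Ω_{2R}
    (Ω2R : Set Pt) (hΩ : Ω2R =
      {x : Pt | -(ε / 2) - h2 x.1 < x.2 ∧ x.2 < ε / 2 + h1 x.1 ∧ |x.1| < 2 * R}) :
    (∀ x ∈ Ω2R, pd1 (fun y => (v y).1) x + pd2 (fun y => (v y).2) x = 0) ∧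
    (∀ x₁ : ℝ, |x₁| < 2 * R → v (x₁, ε / 2 + h1 x₁) = ψ₃ (x₁, ε / 2 + h1 x₁)) ∧
    (∀ x₁ : ℝ, |x₁| < 2 * R → v (x₁, -(ε / 2) - h2 x₁) = (0 : Pt)) :=
  v31_divfree_and_boundary_general m ε R h1 h2 hh1 hh2 hord δ hδ k hk ψ₃ hψ₃ F hF G hG v hv Ω2R hΩ

end
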